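/- For every natural number m, the alternating sum Σ_{i=0}^{⌊m/2⌋} (−1)^i · q^(i(i−1)/2) · [m−i choose i]_q, as a polynomial in ℤ[q], equals 0 if m ≡ 2 (mod 3), and equals (−1)^(⌊m/3⌋) · q^(m(m−1)/6) if m ≢ 2 (mod 3); in the latter case m(m−1)/6 is a nonnegative integer. -/

import Mathlib

/-!
Write `S s m = gaussAltSum q G s m = ∑_{i + a = m} (-1)^i q^(C(i + s, 2)) [a + i choose i]_q`,
so that the sum of the theorem is `S 0 m`. Expanding `[a + 1 + i + 1 choose i + 1]_q` by the two
q-Pascal rules gives `S 0 (m + 2) = S 1 (m + 1) - S 1 m` and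
`S 1 (m + 2) = S 1 (m + 1) - q^(m + 1) S 0 m`, hence `S 0 (m + 3) = -q^(m + 1) S 0 m`.
With `S 0 0 = S 0 1 = 1` and `S 0 2 = 0` the closed form follows by induction, since
`(m + 3)(m + 2) = m(m - 1) + 6(m + 1)`.
-/

open Polynomial Finset Finset.Nat

theorem Finset.Nat.sum_antidiagonal_add_two {M : Type*} [AddCommMonoid M] (f : ℕ × ℕ → M)
    (n : ℕ) :
    ∑ p ∈ antidiagonal (n + 2), f p =
      f (0, n + 2) + f (n + 2, 0) + ∑ p ∈ antidiagonal n, f (p.1 + 1, p.2 + 1) := by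
  rw [sum_antidiagonal_succ, sum_antidiagonal_succ', ← add_assoc]

theorem Nat.choose_two_succ (n : ℕ) : (n + 1).choose 2 = n.choose 2 + n := by
  rw [Nat.choose_succ_succ', Nat.choose_one_right, add_comm]

theorem Nat.six_dvd_mul_sub_one {m : ℕ} (h : m % 3 ≠ 2) : 6 ∣ m * (m - 1) := by
  have h2 : 2 ∣ m * (m - 1) := (Nat.even_mul_pred_self m).two_dvd
  have h3 : 3 ∣ m * (m - 1) := by
    rcases (by omega : m % 3 = 0 ∨ (m - 1) % 3 = 0) with h | h
    · exact (Nat.dvd_of_mod_eq_zero h).mul_right _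
    · exact (Nat.dvd_of_mod_eq_zero h).mul_left _
  exact Nat.Coprime.mul_dvd_of_dvd_of_dvd (by norm_num) h2 h3

structure IsGaussianBinomial {R : Type*} [CommRing R] (q : R) (G : ℕ → ℕ → R) : Prop where
  zero_right : ∀ n, G n 0 = 1
  eq_zero_of_lt : ∀ {n k}, n < k → G n k = 0
  succ_succ : ∀ n k, G (n + 1) (k + 1) = q ^ (k + 1) * G n (k + 1) + G n k
  /-- The rule `[n+1, k+1] = [n, k+1] + q^(n-k) [n, k]`, multiplied by `q^k` so that it holds for
  all `n, k` without truncated subtraction. -/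
  pow_mul_succ_succ : ∀ n k, q ^ k * G (n + 1) (k + 1) = q ^ k * G n (k + 1) + q ^ n * G n k

section Products

variable {R : Type*} [CommRing R]

/-- `(1 - q)^k [k]_q!`. -/
noncomputable def qFactorial (k : ℕ) : R[X] := ∏ i ∈ range k, (1 - X ^ (i + 1))

/-- `(1 - q)^k [m]_q [m - 1]_q ⋯ [m - k + 1]_q`. -/
noncomputable def qDescFactorial (m k : ℕ) : R[X] := ∏ i ∈ range k, (1 - X ^ (m - i))

theorem qFactorial_succ (k : ℕ) :
    (qFactorial (k + 1) : R[X]) = qFactorial k * (1 - X ^ (k + 1)) :=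
  prod_range_succ _ _

theorem qDescFactorial_succ (m k : ℕ) :
    (qDescFactorial m (k + 1) : R[X]) = qDescFactorial m k * (1 - X ^ (m - k)) :=
  prod_range_succ _ _

theorem qDescFactorial_succ_succ (m k : ℕ) :
    (qDescFactorial (m + 1) (k + 1) : R[X]) = (1 - X ^ (m + 1)) * qDescFactorial m k := by
  simp [qDescFactorial, prod_range_succ', mul_comm]

theorem qDescFactorial_eq_zero_of_lt {m k : ℕ} (h : m < k) : (qDescFactorial m k : R[X]) = 0 :=
  prod_eq_zero (mem_range.2 h) (by simp)

theorem qFactorial_ne_zero [Nontrivial R] (k : ℕ) : (qFactorial k : R[X]) ≠ 0 := fun h => by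
  simpa [qFactorial, eval_prod] using congrArg (eval 0) h

theorem isGaussianBinomial_X [IsDomain R] {G : ℕ → ℕ → R[X]}
    (hG : ∀ m k, k ≤ m → G m k * qFactorial k = qDescFactorial m k)
    (hG0 : ∀ m k, m < k → G m k = 0) : IsGaussianBinomial X G := by
  have key (n k : ℕ) : G n k * qFactorial k = qDescFactorial n k := by
    rcases le_or_gt k n with hkn | hnk
    · exact hG n k hkn
    · rw [hG0 n k hnk, zero_mul, qDescFactorial_eq_zero_of_lt hnk]
  have cancel {A B : R[X]} {k : ℕ} (h : A * qFactorial k = B * qFactorial k) : A = B :=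
    mul_right_cancel₀ (qFactorial_ne_zero k) h
  refine ⟨fun n => by simpa [qFactorial, qDescFactorial] using key n 0, hG0 _ _, fun n k => ?_,
    fun n k => ?_⟩
  all_goals
    obtain hnk | ⟨d, rfl⟩ := (lt_or_ge n k).imp_right Nat.exists_eq_add_of_le
    · simp [hG0 _ _ hnk, hG0 _ _ (Nat.succ_lt_succ hnk), hG0 n (k + 1) (by omega)]
    apply cancel (k := k + 1)
  · rw [key, add_mul, mul_assoc, key, qFactorial_succ, ← mul_assoc, key, qDescFactorial_succ_succ,
      qDescFactorial_succ, Nat.add_sub_cancel_left]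
    ring
  · rw [mul_assoc, key, add_mul, mul_assoc, key, mul_assoc, qFactorial_succ, ← mul_assoc (G _ k),
      key, qDescFactorial_succ_succ, qDescFactorial_succ, Nat.add_sub_cancel_left]
    ring

end Products

section AlternatingSum

variable {R : Type*} [CommRing R] {q : R} {G : ℕ → ℕ → R}

def gaussAltSum (q : R) (G : ℕ → ℕ → R) (s m : ℕ) : R :=
  ∑ p ∈ antidiagonal m, (-1) ^ p.1 * q ^ (p.1 + s).choose 2 * G p.2 p.1

theorem gaussAltSum_zero_eq_sum_range (hG : ∀ {n k}, n < k → G n k = 0) (m : ℕ) :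
    gaussAltSum q G 0 m =
      ∑ i ∈ range (m / 2 + 1), (-1) ^ i * q ^ (i * (i - 1) / 2) * G (m - i) i := by
  have hsub : range (m / 2 + 1) ⊆ range (m + 1) := range_subset_range.2 (by omega)
  rw [gaussAltSum, sum_antidiagonal_eq_sum_range_succ_mk, ← sum_subset hsub fun i hi hi' => ?_]
  · simp [Nat.choose_two_right]
  simp only [mem_range, not_lt] at hi hi'
  rw [hG (by omega), mul_zero]

theorem gaussAltSum_one_succ (hG : IsGaussianBinomial q G) (m : ℕ) :
    gaussAltSum q G 1 (m + 1) =
      1 + ∑ p ∈ antidiagonal m, (-1) ^ (p.1 + 1) * q ^ (p.1 + 2).choose 2 * G p.2 (p.1 + 1) := by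
  simp [gaussAltSum, sum_antidiagonal_succ, hG.zero_right]

theorem gaussAltSum_zero_add_two (hG : IsGaussianBinomial q G) (m : ℕ) :
    gaussAltSum q G 0 (m + 2) = gaussAltSum q G 1 (m + 1) - gaussAltSum q G 1 m := by
  rw [gaussAltSum_one_succ hG, gaussAltSum, sum_antidiagonal_add_two, gaussAltSum, add_sub_assoc,
    ← sum_sub_distrib]
  simp only [hG.zero_right, hG.eq_zero_of_lt (Nat.succ_pos _)]
  congr 1
  · simp
  refine sum_congr rfl fun p _ => ?_
  rw [hG.succ_succ, Nat.choose_two_succ (p.1 + 1)]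
  ring

theorem gaussAltSum_one_add_two (hG : IsGaussianBinomial q G) (m : ℕ) :
    gaussAltSum q G 1 (m + 2) =
      gaussAltSum q G 1 (m + 1) - q ^ (m + 1) * gaussAltSum q G 0 m := by
  rw [gaussAltSum_one_succ hG m, gaussAltSum, sum_antidiagonal_add_two, gaussAltSum, mul_sum,
    add_sub_assoc, ← sum_sub_distrib]
  simp only [hG.zero_right, hG.eq_zero_of_lt (Nat.succ_pos _)]
  congr 1
  · simp
  refine sum_congr rfl fun p hp => ?_
  rw [← mem_antidiagonal.1 hp, Nat.choose_two_succ (p.1 + 1), Nat.choose_two_succ p.1]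
  linear_combination (-1) ^ (p.1 + 1) * q ^ (p.1.choose 2 + p.1 + 1) * hG.pow_mul_succ_succ p.2 p.1

theorem gaussAltSum_zero_add_three (hG : IsGaussianBinomial q G) (m : ℕ) :
    gaussAltSum q G 0 (m + 3) = -(q ^ (m + 1) * gaussAltSum q G 0 m) := by
  rw [gaussAltSum_zero_add_two hG, gaussAltSum_one_add_two hG]
  ring

theorem gaussAltSum_zero_eq (hG : IsGaussianBinomial q G) :
    ∀ m, gaussAltSum q G 0 m =
      if m % 3 = 2 then 0 else (-1) ^ (m / 3) * q ^ (m * (m - 1) / 6)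
  | 0 => by simp [gaussAltSum, hG.zero_right]
  | 1 => by simp [gaussAltSum, sum_antidiagonal_succ, hG.zero_right, hG.eq_zero_of_lt]
  | 2 => by
    rw [gaussAltSum_zero_add_two hG]
    simp [gaussAltSum, sum_antidiagonal_succ, hG.zero_right, hG.eq_zero_of_lt]
  | m + 3 => by
    rw [gaussAltSum_zero_add_three hG, gaussAltSum_zero_eq hG m, Nat.add_mod_right,
      Nat.add_div_right _ three_pos]
    split_ifs
    · simp
    · rw [show (m + 3) * (m + 3 - 1) = m * (m - 1) + 6 * (m + 1) by cases m <;> simp; ring,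
        Nat.add_mul_div_left _ _ (by norm_num)]
      ring

end AlternatingSum

theorem gauss_alternating_sum_eval
    (G : ℕ → ℕ → Polynomial ℤ)
    (hG : ∀ m k : ℕ, k ≤ m →
      G m k * ∏ i ∈ Finset.range k, (1 - (X : Polynomial ℤ) ^ (i + 1)) =
        ∏ i ∈ Finset.range k, (1 - (X : Polynomial ℤ) ^ (m - i)))
    (hG0 : ∀ m k : ℕ, m < k → G m k = 0)
    (m : ℕ) :
    (m % 3 = 2 →
        ∑ i ∈ Finset.range (m / 2 + 1),
          (-1 : Polynomial ℤ) ^ i * (X : Polynomial ℤ) ^ (i * (i - 1) / 2) * G (m - i) i = 0) ∧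
      (m % 3 ≠ 2 →
        6 ∣ m * (m - 1) ∧
          ∑ i ∈ Finset.range (m / 2 + 1),
              (-1 : Polynomial ℤ) ^ i * (X : Polynomial ℤ) ^ (i * (i - 1) / 2) * G (m - i) i =
            (-1 : Polynomial ℤ) ^ (m / 3) * (X : Polynomial ℤ) ^ (m * (m - 1) / 6)) := by
  have hGauss : IsGaussianBinomial (X : ℤ[X]) G := isGaussianBinomial_X hG hG0
  rw [← gaussAltSum_zero_eq_sum_range hGauss.eq_zero_of_lt, gaussAltSum_zero_eq hGauss]
  exact ⟨fun h => if_pos h, fun h => ⟨Nat.six_dvd_mul_sub_one h, if_neg h⟩⟩
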